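/- Let X ⊆ ℝ^m be Jordan measurable, K ⊆ X Lebesgue null, G : X → ℝ^m Lipschitz, strongly differentiable at almost every point of int X, and injective on X ∖ K. Let h̄ : X → ℝ^{m×m} be any Riemann integrable matrix-valued function with h̄(x) = J_G(x) for almost all x ∈ int X, and let f : G(X) → ℝ be bounded. Then ψ(x) := f(G(x))·|det h̄(x)| is Riemann integrable on X if and only if f is Riemann integrable on G(X), and in that case ∫_{G(X)} f = ∫_X f(G(x))·|det h̄(x)| dx. -/

import Mathlib

open Set Metric MeasureTheory

/-- A set is Jordan measurable if it is bounded and its boundary is a null set. -/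
def JordanMeasurable {m : ℕ} (X : Set (Fin m → ℝ)) : Prop :=
  Bornology.IsBounded X ∧ volume (frontier X) = 0

/-- Riemann integrability of a bounded function on a set, via the Lebesgue criterion. -/
def RiemannIntegrableOn {m : ℕ} (g : (Fin m → ℝ) → ℝ) (X : Set (Fin m → ℝ)) : Prop :=
  (∃ C : ℝ, ∀ x ∈ X, |g x| ≤ C) ∧
    ∀ᵐ x ∂(volume.restrict X), ContinuousWithinAt g X x

/-- `f` is strongly (strictly) differentiable at `u`, an interior point of `s`,
with derivative `A`. -/
def HasStrongDerivAt {m n : ℕ} (f : (Fin m → ℝ) → (Fin n → ℝ))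
    (A : (Fin m → ℝ) →L[ℝ] (Fin n → ℝ)) (s : Set (Fin m → ℝ)) (u : Fin m → ℝ) : Prop :=
  ∀ ε > (0 : ℝ), ∃ δ > (0 : ℝ), ball u δ ⊆ s ∧
    ∀ x ∈ ball u δ, ∀ y ∈ ball u δ, ‖f x - f y - A (x - y)‖ ≤ ε * ‖x - y‖

/-!
On the full-measure part `s = int X \ (K ∪ N)` of `X`, the map `G` is injective and strictly
differentiable with Jacobian determinant `det h̄`, so Mathlib's change of variables formula gives the
integral identity, and `G` transports "almost everywhere" statements between `X` and `G(X)` once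
critical points are discarded (their image is null). At a point of `s` where `det h̄` is continuous
and nonzero, `G` is open (inverse function theorem), so `ψ` is continuous at `x` iff `f` is continuous
at `G x`; where `det h̄ x = 0`, `ψ` is continuous at `x` anyway, `f` being bounded. By the Lebesgue
criterion this gives both directions of the equivalence.
-/

open Filter Topology

theorem LipschitzOnWith.volume_image_null {ι : Type*} [Fintype ι] {L : NNReal}
    {g : (ι → ℝ) → (ι → ℝ)} {s t : Set (ι → ℝ)} (hg : LipschitzOnWith L g s) (hts : t ⊆ s)
    (ht : volume t = 0) : volume (g '' t) = 0 := by
  have h := (hg.mono hts).hausdorffMeasure_image_le (d := (Fintype.card ι : ℝ)) (by positivity)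
  rw [hausdorffMeasure_pi_real, ht, mul_zero] at h
  exact nonpos_iff_eq_zero.1 h

theorem LipschitzOnWith.image_ae_eq_image {ι : Type*} [Fintype ι] {L : NNReal}
    {g : (ι → ℝ) → (ι → ℝ)} {s t : Set (ι → ℝ)} (hg : LipschitzOnWith L g s) (hts : t ⊆ s)
    (hst : s =ᵐ[volume] t) : g '' s =ᵐ[volume] g '' t := by
  rw [← union_sdiff_cancel hts, image_union]
  exact union_ae_eq_left_of_ae_eq_empty
    (ae_eq_empty.2 (hg.volume_image_null sdiff_subset (ae_eq_set.1 hst).1))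

theorem HasStrongDerivAt.hasStrictFDerivAt {m n : ℕ} {f : (Fin m → ℝ) → (Fin n → ℝ)}
    {A : (Fin m → ℝ) →L[ℝ] (Fin n → ℝ)} {s : Set (Fin m → ℝ)} {u : Fin m → ℝ}
    (h : HasStrongDerivAt f A s u) : HasStrictFDerivAt f A u := by
  refine .of_isLittleO <| Asymptotics.isLittleO_iff.2 fun ε hε => ?_
  obtain ⟨δ, hδ, -, hest⟩ := h ε hε
  filter_upwards [prod_mem_nhds (ball_mem_nhds u hδ) (ball_mem_nhds u hδ)] with p hp
  exact hest p.1 hp.1 p.2 hp.2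

theorem HasStrictFDerivAt.map_nhds_eq_of_det_ne_zero {E : Type*} [NormedAddCommGroup E]
    [NormedSpace ℝ E] [FiniteDimensional ℝ E] {G : E → E} {A : E →L[ℝ] E} {x : E}
    (hG : HasStrictFDerivAt G A x) (hA : A.det ≠ 0) : map G (𝓝 x) = 𝓝 (G x) :=
  HasStrictFDerivAt.map_nhds_eq_of_equiv
    (f' := (LinearMap.equivOfDetNeZero (A : E →ₗ[ℝ] E) hA).toContinuousLinearEquiv) hG

theorem ae_restrict_image_iff_of_hasFDerivWithinAt {E : Type*} [NormedAddCommGroup E]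
    [NormedSpace ℝ E] [FiniteDimensional ℝ E] [MeasurableSpace E] [BorelSpace E]
    (μ : Measure E) [μ.IsAddHaarMeasure] {s : Set E} {f : E → E} {f' : E → E →L[ℝ] E}
    (hs : MeasurableSet s)
    (hf' : ∀ x ∈ s, HasFDerivWithinAt f (f' x) s x) (hf : InjOn f s) {p : E → Prop} :
    (∀ᵐ y ∂μ.restrict (f '' s), p y) ↔ ∀ᵐ x ∂μ.restrict s, (f' x).det ≠ 0 → p (f x) := by
  constructor
  · intro h
    rw [← map_withDensity_abs_det_fderiv_eq_addHaar μ hs.nullMeasurableSet hf' hf] at h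
    have hcont : ContinuousOn f s := fun x hx => (hf' x hx).continuousWithinAt
    have hmeas : AEMeasurable f
        ((μ.restrict s).withDensity fun x => ENNReal.ofReal |(f' x).det|) :=
      (hcont.aemeasurable hs).mono_ac (withDensity_absolutelyContinuous _ _)
    filter_upwards [(ae_withDensity_iff' (aemeasurable_ofReal_abs_det_fderivWithin μ hs hf')).1
      (ae_of_ae_map hmeas h)] with x hx hdet
    exact hx (by simpa using hdet)
  · intro h
    set B := {x | ¬((f' x).det ≠ 0 → p (f x))} ∩ s
    have hB : μ B = 0 := nonpos_iff_eq_zero.1 ((Measure.le_restrict_apply _ _).trans_eq (ae_iff.1 h))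
    have hfB : μ (f '' B) = 0 := addHaar_image_eq_zero_of_differentiableOn_of_addHaar_eq_zero μ
      (fun x hx => (hf' x hx.2).differentiableWithinAt.mono inter_subset_right) hB
    have hcrit : μ (f '' {x ∈ s | (f' x).det = 0}) = 0 :=
      addHaar_image_eq_zero_of_det_fderivWithin_eq_zero μ
        (fun x hx => (hf' x hx.1).mono (sep_subset _ _)) fun x hx => hx.2
    filter_upwards [ae_restrict_mem (measurable_image_of_fderivWithin hs hf' hf),
      ae_restrict_of_ae (measure_eq_zero_iff_ae_notMem.1 (measure_union_null hfB hcrit))]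
      with y ⟨x, hxs, hxy⟩ hy
    subst hxy
    by_contra hpx
    by_cases hdet : (f' x).det = 0
    · exact hy (Or.inr ⟨x, ⟨hxs, hdet⟩, rfl⟩)
    · exact hy (Or.inl ⟨x, ⟨fun h => hpx (h hdet), hxs⟩, rfl⟩)

section Continuity

variable {α β : Type*} [TopologicalSpace α] [TopologicalSpace β]

theorem continuousAt_mul_iff_of_ne_zero {u v : α → ℝ} {x : α} (hv : ContinuousAt v x)
    (hvx : v x ≠ 0) : ContinuousAt (fun y => u y * v y) x ↔ ContinuousAt u x := by
  refine ⟨fun h => (h.div hv hvx).congr ?_, fun h => h.mul hv⟩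
  filter_upwards [hv.eventually_ne hvx] with y hy
  exact mul_div_cancel_right₀ (u y) hy

theorem continuousWithinAt_mul_of_bounded_of_eq_zero {u v : α → ℝ} {X : Set α} {x : α} {C : ℝ}
    (hu : ∀ y ∈ X, |u y| ≤ C) (hv : ContinuousWithinAt v X x) (hvx : v x = 0) :
    ContinuousWithinAt (fun y => u y * v y) X x := by
  rw [ContinuousWithinAt, hvx] at hv ⊢
  rw [mul_zero]
  exact isBoundedUnder_le_mul_tendsto_zero
    (isBoundedUnder_of_eventually_le (a := C) (eventually_nhdsWithin_of_forall hu)) hv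

theorem continuousWithinAt_comp_mul_iff {X : Set α} {G : α → β} {x : α} (hX : X ∈ 𝓝 x)
    (hG : map G (𝓝 x) = 𝓝 (G x)) {f : β → ℝ} {v : α → ℝ} (hv : ContinuousAt v x)
    (hvx : v x ≠ 0) :
    ContinuousWithinAt (fun y => f (G y) * v y) X x ↔ ContinuousWithinAt f (G '' X) (G x) := by
  have hGX : G '' X ∈ 𝓝 (G x) := hG ▸ image_mem_map hX
  rw [continuousWithinAt_iff_continuousAt hX, continuousWithinAt_iff_continuousAt hGX,
    continuousAt_mul_iff_of_ne_zero hv hvx, ContinuousAt, ContinuousAt, ← hG, tendsto_map'_iff]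
  rfl

theorem continuousWithinAt_det_of_entries {n : Type*} [Fintype n] [DecidableEq n]
    {M : α → Matrix n n ℝ} {X : Set α} {x : α}
    (h : ∀ i j, ContinuousWithinAt (fun y => M y i j) X x) :
    ContinuousWithinAt (fun y => (M y).det) X x :=
  (continuous_id.matrix_det).continuousAt.comp_continuousWithinAt
    (continuousWithinAt_pi.2 fun i => continuousWithinAt_pi.2 fun j => h i j)

end Continuity

theorem exists_bound_det_of_entries {α n : Type*} [Fintype n] [DecidableEq n]
    {M : α → Matrix n n ℝ} {X : Set α} (h : ∀ i j, ∃ C, ∀ x ∈ X, |M x i j| ≤ C) :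
    ∃ C, ∀ x ∈ X, |(M x).det| ≤ C := by
  choose C hC using h
  have hK : IsCompact (univ.pi fun i => univ.pi fun j => Icc (-C i j) (C i j) :
      Set (Matrix n n ℝ)) :=
    isCompact_univ_pi fun i => isCompact_univ_pi fun j => isCompact_Icc
  obtain ⟨D, hD⟩ := hK.exists_bound_of_continuousOn (continuous_id.matrix_det).continuousOn
  exact ⟨D, fun x hx => hD (M x) fun i _ j _ => abs_le.1 (hC i j x hx)⟩

theorem RiemannIntegrableOn.abs_det {m : ℕ} {M : (Fin m → ℝ) → Matrix (Fin m) (Fin m) ℝ}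
    {X : Set (Fin m → ℝ)} (h : ∀ i j, RiemannIntegrableOn (fun x => M x i j) X) :
    RiemannIntegrableOn (fun x => |(M x).det|) X := by
  refine ⟨?_, ?_⟩
  · obtain ⟨C, hC⟩ := exists_bound_det_of_entries fun i j => (h i j).1
    exact ⟨C, fun x hx => by simpa using hC x hx⟩
  · filter_upwards [ae_all_iff.2 fun i => ae_all_iff.2 fun j => (h i j).2] with x hx
    exact (continuousWithinAt_det_of_entries hx).abs

structure IsRegularPart {m : ℕ} (X : Set (Fin m → ℝ)) (G : (Fin m → ℝ) → (Fin m → ℝ))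
    (M : (Fin m → ℝ) → Matrix (Fin m) (Fin m) ℝ) (A : (Fin m → ℝ) → (Fin m → ℝ) →L[ℝ] (Fin m → ℝ))
    (s : Set (Fin m → ℝ)) : Prop where
  measurableSet : MeasurableSet s
  subset_interior : s ⊆ interior X
  ae_eq : X =ᵐ[volume] s
  image_ae_eq : G '' X =ᵐ[volume] G '' s
  injOn : InjOn G s
  hasStrictFDerivAt : ∀ x ∈ s, HasStrictFDerivAt G (A x) x
  det_eq : ∀ x ∈ s, (M x).det = (A x).det

theorem exists_isRegularPart {m : ℕ} {X K N : Set (Fin m → ℝ)} (hX : volume (frontier X) = 0)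
    (hK : volume K = 0) (hN : volume N = 0) {G : (Fin m → ℝ) → (Fin m → ℝ)} {L : NNReal}
    (hG : LipschitzOnWith L G X) (hinj : InjOn G (X \ K))
    {M : (Fin m → ℝ) → Matrix (Fin m) (Fin m) ℝ}
    (hjac : ∀ x ∈ interior X \ N, ∃ A : (Fin m → ℝ) →L[ℝ] (Fin m → ℝ),
      HasStrongDerivAt G A X x ∧ M x = LinearMap.toMatrix' (A : (Fin m → ℝ) →ₗ[ℝ] (Fin m → ℝ))) :
    ∃ A s, IsRegularPart X G M A s := by
  choose! A hA hM using hjac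
  set s := interior X \ toMeasurable volume (K ∪ N)
  have hsX : s ⊆ interior X := sdiff_subset
  have hgood : ∀ x ∈ s, x ∈ interior X \ N ∧ x ∉ K := fun x hx =>
    ⟨⟨hx.1, fun h => hx.2 (subset_toMeasurable _ _ (Or.inr h))⟩,
      fun h => hx.2 (subset_toMeasurable _ _ (Or.inl h))⟩
  have hXs : X =ᵐ[volume] s := (interior_ae_eq_of_null_frontier hX).symm.trans
    (sdiff_null_ae_eq_self (by rw [measure_toMeasurable]; exact measure_union_null hK hN)).symm
  refine ⟨A, s, isOpen_interior.measurableSet.diff (measurableSet_toMeasurable _ _), hsX, hXs,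
    hG.image_ae_eq_image (hsX.trans interior_subset) hXs,
    hinj.mono (fun x hx => ⟨interior_subset (hsX hx), (hgood x hx).2⟩ : s ⊆ X \ K),
    fun x hx => (hA x (hgood x hx).1).hasStrictFDerivAt, fun x hx => ?_⟩
  rw [hM x (hgood x hx).1, LinearMap.det_toMatrix']

namespace IsRegularPart

variable {m : ℕ} {X s : Set (Fin m → ℝ)} {G : (Fin m → ℝ) → (Fin m → ℝ)}
  {M : (Fin m → ℝ) → Matrix (Fin m) (Fin m) ℝ} {A : (Fin m → ℝ) → (Fin m → ℝ) →L[ℝ] (Fin m → ℝ)}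

theorem ae_mem (h : IsRegularPart X G M A s) : ∀ᵐ x ∂volume.restrict X, x ∈ s :=
  Measure.restrict_congr_set h.ae_eq ▸ ae_restrict_mem h.measurableSet

theorem ae_restrict_image_iff (h : IsRegularPart X G M A s) {p : (Fin m → ℝ) → Prop} :
    (∀ᵐ y ∂volume.restrict (G '' X), p y) ↔ ∀ᵐ x ∂volume.restrict X, (A x).det ≠ 0 → p (G x) := by
  rw [Measure.restrict_congr_set h.image_ae_eq, Measure.restrict_congr_set h.ae_eq]
  exact ae_restrict_image_iff_of_hasFDerivWithinAt volume h.measurableSet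
    (fun x hx => (h.hasStrictFDerivAt x hx).hasFDerivAt.hasFDerivWithinAt) h.injOn

theorem continuousWithinAt_comp_mul_abs_det_iff (h : IsRegularPart X G M A s) {f : (Fin m → ℝ) → ℝ}
    {x : Fin m → ℝ} (hx : x ∈ s) (hAx : (A x).det ≠ 0)
    (hM : ContinuousWithinAt (fun y => |(M y).det|) X x) :
    ContinuousWithinAt (fun y => f (G y) * |(M y).det|) X x ↔
      ContinuousWithinAt f (G '' X) (G x) := by
  have hX : X ∈ 𝓝 x := mem_interior_iff_mem_nhds.1 (h.subset_interior hx)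
  exact continuousWithinAt_comp_mul_iff hX
    ((h.hasStrictFDerivAt x hx).map_nhds_eq_of_det_ne_zero hAx) (hM.continuousAt hX)
    (by rw [h.det_eq x hx]; exact abs_ne_zero.2 hAx)

theorem riemannIntegrableOn_of_comp_mul_abs_det (h : IsRegularPart X G M A s)
    {f : (Fin m → ℝ) → ℝ} (hf : ∃ C, ∀ y ∈ G '' X, |f y| ≤ C)
    (hM : RiemannIntegrableOn (fun x => |(M x).det|) X)
    (hψ : RiemannIntegrableOn (fun x => f (G x) * |(M x).det|) X) :
    RiemannIntegrableOn f (G '' X) := by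
  refine ⟨hf, h.ae_restrict_image_iff.2 ?_⟩
  filter_upwards [h.ae_mem, hψ.2, hM.2] with x hxs hψx hMx hAx
  exact (h.continuousWithinAt_comp_mul_abs_det_iff hxs hAx hMx).1 hψx

theorem riemannIntegrableOn_comp_mul_abs_det (h : IsRegularPart X G M A s) {f : (Fin m → ℝ) → ℝ}
    (hM : RiemannIntegrableOn (fun x => |(M x).det|) X) (hf : RiemannIntegrableOn f (G '' X)) :
    RiemannIntegrableOn (fun x => f (G x) * |(M x).det|) X := by
  obtain ⟨⟨C, hC⟩, hfc⟩ := hf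
  have hCG : ∀ x ∈ X, |f (G x)| ≤ C := fun x hx => hC (G x) (mem_image_of_mem G hx)
  obtain ⟨D, hD⟩ := hM.1
  refine ⟨⟨C * D, fun x hx => ?_⟩, ?_⟩
  · rw [abs_mul]
    exact mul_le_mul (hCG x hx) (hD x hx) (abs_nonneg _) ((abs_nonneg _).trans (hCG x hx))
  · filter_upwards [h.ae_mem, h.ae_restrict_image_iff.1 hfc, hM.2] with x hxs hfx hMx
    by_cases h0 : (M x).det = 0
    · exact continuousWithinAt_mul_of_bounded_of_eq_zero hCG hMx (by simp [h0])
    · have hAx : (A x).det ≠ 0 := h.det_eq x hxs ▸ h0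
      exact (h.continuousWithinAt_comp_mul_abs_det_iff hxs hAx hMx).2 (hfx hAx)

theorem setIntegral_image (h : IsRegularPart X G M A s) (f : (Fin m → ℝ) → ℝ) :
    ∫ y in G '' X, f y = ∫ x in X, f (G x) * |(M x).det| := by
  have hs := h.measurableSet
  calc ∫ y in G '' X, f y = ∫ y in G '' s, f y := setIntegral_congr_set h.image_ae_eq
    _ = ∫ x in s, |(A x).det| • f (G x) := integral_image_eq_integral_abs_det_fderiv_smul volume hs
        (fun x hx => (h.hasStrictFDerivAt x hx).hasFDerivAt.hasFDerivWithinAt) h.injOn f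
    _ = ∫ x in s, f (G x) * |(M x).det| := setIntegral_congr_fun hs fun x hx => by
        rw [h.det_eq x hx, smul_eq_mul, mul_comm]
    _ = ∫ x in X, f (G x) * |(M x).det| := (setIntegral_congr_set h.ae_eq).symm

end IsRegularPart

theorem change_of_variables_main_general {m : ℕ} (X K : Set (Fin m → ℝ))
    (hX : JordanMeasurable X) (hK : volume K = 0)
    (G : (Fin m → ℝ) → (Fin m → ℝ)) (L : NNReal) (hG : LipschitzOnWith L G X)
    (hinj : Set.InjOn G (X \ K))
    (hbar : (Fin m → ℝ) → Matrix (Fin m) (Fin m) ℝ)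
    (hhbarint : ∀ i j : Fin m, RiemannIntegrableOn (fun x => hbar x i j) X)
    (hhbarjac : ∃ N : Set (Fin m → ℝ), volume N = 0 ∧ ∀ x ∈ interior X \ N,
      ∃ A : (Fin m → ℝ) →L[ℝ] (Fin m → ℝ), HasStrongDerivAt G A X x ∧
        hbar x = LinearMap.toMatrix' (A : (Fin m → ℝ) →ₗ[ℝ] (Fin m → ℝ)))
    (f : (Fin m → ℝ) → ℝ) (hf : ∃ C : ℝ, ∀ y ∈ G '' X, |f y| ≤ C) :
    (RiemannIntegrableOn (fun x => f (G x) * |(hbar x).det|) X ↔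
      RiemannIntegrableOn f (G '' X)) ∧
    (RiemannIntegrableOn f (G '' X) →
      ∫ y in G '' X, f y = ∫ x in X, f (G x) * |(hbar x).det|) := by
  obtain ⟨N, hN, hjac⟩ := hhbarjac
  obtain ⟨A, s, hs⟩ := exists_isRegularPart hX.2 hK hN hG hinj hjac
  have hdet := RiemannIntegrableOn.abs_det hhbarint
  exact ⟨⟨hs.riemannIntegrableOn_of_comp_mul_abs_det hf hdet,
    hs.riemannIntegrableOn_comp_mul_abs_det hdet⟩, fun _ => hs.setIntegral_image f⟩

/-- The main multidimensional change of variables theorem: for a Lipschitz map `G` which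
is a.e. strongly differentiable on `int X` and injective off a null set `K ⊆ X`, a
Riemann integrable matrix-valued `hbar` equal to the Jacobian `J_G` a.e. on `int X`, and a
bounded `f` on `G(X)`, the function `ψ(x) = f(G(x))·|det hbar(x)|` is Riemann integrable on
`X` iff `f` is Riemann integrable on `G(X)`, and then `∫_{G(X)} f = ∫_X ψ`. -/
theorem change_of_variables_main {m : ℕ} (X K : Set (Fin m → ℝ))
    (hX : JordanMeasurable X) (hKX : K ⊆ X) (hK : volume K = 0)
    (G : (Fin m → ℝ) → (Fin m → ℝ)) (L : NNReal) (hG : LipschitzOnWith L G X)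
    (hinj : Set.InjOn G (X \ K))
    (hbar : (Fin m → ℝ) → Matrix (Fin m) (Fin m) ℝ)
    (hhbarint : ∀ i j : Fin m, RiemannIntegrableOn (fun x => hbar x i j) X)
    (hhbarjac : ∃ N : Set (Fin m → ℝ), volume N = 0 ∧ ∀ x ∈ interior X \ N,
      ∃ A : (Fin m → ℝ) →L[ℝ] (Fin m → ℝ), HasStrongDerivAt G A X x ∧
        hbar x = LinearMap.toMatrix' (A : (Fin m → ℝ) →ₗ[ℝ] (Fin m → ℝ)))
    (f : (Fin m → ℝ) → ℝ) (hf : ∃ C : ℝ, ∀ y ∈ G '' X, |f y| ≤ C) :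
    (RiemannIntegrableOn (fun x => f (G x) * |(hbar x).det|) X ↔
      RiemannIntegrableOn f (G '' X)) ∧
    (RiemannIntegrableOn f (G '' X) →
      ∫ y in G '' X, f y = ∫ x in X, f (G x) * |(hbar x).det|) :=
  change_of_variables_main_general X K hX hK G L hG hinj hbar hhbarint hhbarjac f hf
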